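/- Let n ≥ 1, i ∈ [n], and a ∈ ℝⁿ. If a_i < max_{j ∈ [n]} a_j − log n − 3, then ∂²Boltz(a)/∂a_i² < 0; that is, the Boltzmann operator is strictly concave in the coordinate a_i on the region where a_i lies more than log n + 3 below the maximum entry. Moreover, on this region the second derivative equals p_i · [(1 − 2p_i)(log p_i + 𝒮(p) + 1) + 1] with p = σ_S[a], and this quantity is negative. -/

import Mathlib

open scoped BigOperators Classical
open Matrix

noncomputable section

def softmax {n : ℕ} (a : Fin n → ℝ) : Fin n → ℝ :=
  fun i => Real.exp (a i) / ∑ j, Real.exp (a j)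

def boltz {n : ℕ} (a : Fin n → ℝ) : ℝ := ∑ i, a i * softmax a i

def argmaxSet {n : ℕ} (a : Fin n → ℝ) : Finset (Fin n) :=
  Finset.univ.filter (fun i => ∀ j, a j ≤ a i)

def hardmax {n : ℕ} (a : Fin n → ℝ) : Fin n → ℝ :=
  fun i => if i ∈ argmaxSet a then (1 : ℝ) / (argmaxSet a).card else 0

def softmaxCols {n m : ℕ} (A : Matrix (Fin n) (Fin m) ℝ) : Matrix (Fin n) (Fin m) ℝ :=
  Matrix.of fun i k => softmax (fun j => A j k) i

def hardmaxCols {n m : ℕ} (A : Matrix (Fin n) (Fin m) ℝ) : Matrix (Fin n) (Fin m) ℝ :=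
  Matrix.of fun i k => hardmax (fun j => A j k) i

def attnS {d n s : ℕ} (WO : Matrix (Fin d) (Fin s) ℝ)
    (WV WK WQ : Matrix (Fin s) (Fin d) ℝ) (Z : Matrix (Fin d) (Fin n) ℝ) :
    Matrix (Fin d) (Fin n) ℝ :=
  Z + WO * (WV * Z) * softmaxCols ((WK * Z)ᵀ * (WQ * Z))

def attnH {d n s h : ℕ} (WO : Fin h → Matrix (Fin d) (Fin s) ℝ)
    (WV WK WQ : Fin h → Matrix (Fin s) (Fin d) ℝ) (Z : Matrix (Fin d) (Fin n) ℝ) :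
    Matrix (Fin d) (Fin n) ℝ :=
  Z + ∑ i, WO i * (WV i * Z) * hardmaxCols ((WK i * Z)ᵀ * (WQ i * Z))

def l2norm {d : ℕ} (x : Fin d → ℝ) : ℝ := Real.sqrt (∑ t, (x t) ^ 2)

def TokSep {d n N : ℕ} (rmin rmax δ : ℝ) (X : Fin N → Matrix (Fin d) (Fin n) ℝ) : Prop :=
  (∀ i k, rmin < l2norm (fun t => X i t k)) ∧
  (∀ i k, l2norm (fun t => X i t k) < rmax) ∧
  (∀ i j k l, (fun t => X i t k) ≠ (fun t => X j t l) →
    δ < l2norm (fun t => X i t k - X j t l))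

def vocab {d n : ℕ} (X : Matrix (Fin d) (Fin n) ℝ) : Finset (Fin d → ℝ) :=
  Finset.image (fun k => (fun t => X t k)) Finset.univ

def ContextualMapping {d n N : ℕ} (X : Fin N → Matrix (Fin d) (Fin n) ℝ)
    (q : Matrix (Fin d) (Fin n) ℝ → Matrix (Fin d) (Fin n) ℝ) (r δ : ℝ) : Prop :=
  (∀ i k, l2norm (fun t => q (X i) t k) < r) ∧
  (∀ i j k l, (vocab (X i) ≠ vocab (X j) ∨ (fun t => X i t k) ≠ (fun t => X j t l)) →
    δ < l2norm (fun t => q (X i) t k - q (X j) t l))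

def ffn {d n q : ℕ} (W1 : Matrix (Fin q) (Fin d) ℝ) (W2 : Matrix (Fin d) (Fin q) ℝ)
    (b1 : Fin q → ℝ) (b2 : Fin d → ℝ) (H : Matrix (Fin d) (Fin n) ℝ) :
    Matrix (Fin d) (Fin n) ℝ :=
  Matrix.of fun t k =>
    H t k + W2.mulVec (fun u => max 0 (W1.mulVec (fun t' => H t' k) u + b1 u)) t + b2 t

def logSumExp {n : ℕ} (a : Fin n → ℝ) : ℝ := Real.log (∑ i, Real.exp (a i))

def entS {n : ℕ} (p : Fin n → ℝ) : ℝ := -∑ i, p i * Real.log (p i)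


/-! Along the coordinate `a i`, with `p = softmax a i`, one has `p' = p (1 - p)` and
`boltz' = p (1 + a i - boltz a)`, hence `boltz'' = p ((1 - 2p) (a i - boltz a + 1) + 1)`, and
`a i - boltz a = log p + entS p` because `boltz = logSumExp - entS ∘ softmax`. Since the entropy is
at most `log n` and `logSumExp a ≥ max a`, the hypothesis gives `a i - boltz a + 1 < -2`, while
`p ≤ exp (a i - max a) < exp (-3) < 1/4`; so the bracket is below `-2 · 1/2 + 1 = 0`. -/

open Real Function

section

variable {n : ℕ}

theorem sum_comp_update (g : ℝ → ℝ) (a : Fin n → ℝ) (i : Fin n) (x : ℝ) :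
    ∑ j, g (update a i x j) = g x + ∑ j ∈ Finset.univ \ {i}, g (a j) := by
  simp_rw [← comp_apply (f := g), comp_update]
  exact Finset.sum_update_of_mem (Finset.mem_univ i) _ _

theorem sum_exp_pos (a : Fin n → ℝ) (i : Fin n) : 0 < ∑ j, exp (a j) :=
  Finset.sum_pos (fun _ _ => exp_pos _) ⟨i, Finset.mem_univ i⟩

theorem softmax_pos (a : Fin n → ℝ) (i : Fin n) : 0 < softmax a i :=
  div_pos (exp_pos _) (sum_exp_pos a i)

theorem sum_softmax (a : Fin n → ℝ) (i : Fin n) : ∑ j, softmax a j = 1 := by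
  simp only [softmax, ← Finset.sum_div]
  exact div_self (sum_exp_pos a i).ne'

theorem log_softmax (a : Fin n → ℝ) (i : Fin n) :
    log (softmax a i) = a i - logSumExp a := by
  rw [softmax, log_div (exp_ne_zero _) (sum_exp_pos a i).ne', log_exp, logSumExp]

theorem softmax_le_exp_sub (a : Fin n → ℝ) (i j : Fin n) :
    softmax a i ≤ exp (a i - a j) := by
  rw [softmax, exp_sub]
  exact div_le_div_of_nonneg_left (exp_pos _).le (exp_pos _)
    (Finset.single_le_sum (fun k _ => (exp_pos (a k)).le) (Finset.mem_univ j))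

theorem le_logSumExp (a : Fin n → ℝ) (j : Fin n) : a j ≤ logSumExp a :=
  (le_log_iff_exp_le (sum_exp_pos a j)).mpr
    (Finset.single_le_sum (fun k _ => (exp_pos (a k)).le) (Finset.mem_univ j))

theorem boltz_eq_div (a : Fin n → ℝ) :
    boltz a = (∑ j, a j * exp (a j)) / ∑ j, exp (a j) := by
  simp only [boltz, softmax, mul_div_assoc', Finset.sum_div]

theorem entS_softmax (a : Fin n → ℝ) (i : Fin n) :
    entS (softmax a) = logSumExp a - boltz a := by
  have hL : ∑ j, softmax a j * logSumExp a = logSumExp a := by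
    rw [← Finset.sum_mul, sum_softmax a i, one_mul]
  simp only [entS, boltz, log_softmax, mul_sub, Finset.sum_sub_distrib, hL, mul_comm (a _)]
  ring

theorem log_softmax_add_entS (a : Fin n → ℝ) (i : Fin n) :
    log (softmax a i) + entS (softmax a) = a i - boltz a := by
  rw [log_softmax, entS_softmax a i]
  ring

theorem entS_le_log_card (p : Fin n → ℝ) (hp : ∀ j, 0 ≤ p j) (hsum : ∑ j, p j = 1) :
    entS p ≤ log n := by
  have hn : (0 : ℝ) < n := by
    rcases Nat.eq_zero_or_pos n with rfl | hn
    · simp at hsum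
    · exact_mod_cast hn
  have hJensen : ∑ j, (n : ℝ)⁻¹ * negMulLog (p j) ≤ negMulLog (∑ j, (n : ℝ)⁻¹ * p j) :=
    concaveOn_negMulLog.le_map_sum (fun _ _ => by positivity) (by simp [hn.ne'])
      (fun j _ => hp j)
  have hmean : negMulLog (∑ j, (n : ℝ)⁻¹ * p j) = (n : ℝ)⁻¹ * log n := by
    rw [← Finset.mul_sum, hsum, mul_one, negMulLog, log_inv]
    ring
  rw [← Finset.mul_sum, hmean] at hJensen
  have hent : entS p = ∑ j, negMulLog (p j) := by
    simp [entS, negMulLog_eq_neg, Finset.sum_neg_distrib]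
  rw [hent]
  exact le_of_mul_le_mul_left hJensen (inv_pos.2 hn)

theorem sub_log_card_le_boltz (a : Fin n → ℝ) (j : Fin n) : a j - log n ≤ boltz a := by
  have hent := entS_le_log_card (softmax a) (fun k => (softmax_pos a k).le) (sum_softmax a j)
  linarith [entS_softmax a j, le_logSumExp a j]

theorem softmax_update_self (a : Fin n → ℝ) (i : Fin n) (x : ℝ) :
    softmax (update a i x) i = exp x / (exp x + ∑ j ∈ Finset.univ \ {i}, exp (a j)) := by
  simp only [softmax, update_self, sum_comp_update exp]

theorem boltz_update (a : Fin n → ℝ) (i : Fin n) (x : ℝ) :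
    boltz (update a i x) = (x * exp x + ∑ j ∈ Finset.univ \ {i}, a j * exp (a j)) /
      (exp x + ∑ j ∈ Finset.univ \ {i}, exp (a j)) := by
  rw [boltz_eq_div, sum_comp_update exp, sum_comp_update (fun t => t * exp t)]

theorem hasDerivAt_softmax_update_self (a : Fin n → ℝ) (i : Fin n) :
    HasDerivAt (fun x => softmax (update a i x) i) (softmax a i * (1 - softmax a i)) (a i) := by
  have hp := softmax_update_self a i (a i)
  rw [update_eq_self] at hp
  simp only [softmax_update_self, hp]
  refine ((hasDerivAt_exp (a i)).div ((hasDerivAt_exp (a i)).add_const _)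
    (by positivity)).congr_deriv ?_
  field_simp

theorem hasDerivAt_boltz_update_self (a : Fin n → ℝ) (i : Fin n) :
    HasDerivAt (fun x => boltz (update a i x)) (softmax a i * (1 + a i - boltz a)) (a i) := by
  have hp := softmax_update_self a i (a i)
  have hB := boltz_update a i (a i)
  rw [update_eq_self] at hp hB
  simp only [boltz_update, hp, hB]
  refine ((((hasDerivAt_id (a i)).mul (hasDerivAt_exp (a i))).add_const _).div
    ((hasDerivAt_exp (a i)).add_const _) (by positivity)).congr_deriv ?_
  simp only [id, Pi.mul_apply]
  field_simp

theorem deriv_boltz_update (a : Fin n → ℝ) (i : Fin n) :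
    deriv (fun x => boltz (update a i x)) =
      fun x => softmax (update a i x) i * (1 + x - boltz (update a i x)) := by
  funext x
  simpa using (hasDerivAt_boltz_update_self (update a i x) i).deriv

theorem deriv_deriv_boltz_update (a : Fin n → ℝ) (i : Fin n) :
    deriv (deriv fun x => boltz (update a i x)) (a i) =
      softmax a i * ((1 - 2 * softmax a i) * (a i - boltz a + 1) + 1) := by
  rw [deriv_boltz_update]
  refine (((hasDerivAt_softmax_update_self a i).mul
    (((hasDerivAt_id (a i)).const_add 1).sub (hasDerivAt_boltz_update_self a i))).congr_deriv
    ?_).deriv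
  simp only [id, Pi.sub_apply, update_eq_self]
  ring

end

theorem statement12_general (n : ℕ) (i : Fin n) (a : Fin n → ℝ)
    (h : a i < Finset.univ.sup' ⟨i, Finset.mem_univ i⟩ a - Real.log n - 3) :
    deriv (deriv (fun x => boltz (Function.update a i x))) (a i) =
        softmax a i *
          ((1 - 2 * softmax a i) * (Real.log (softmax a i) + entS (softmax a) + 1) + 1) ∧
      deriv (deriv (fun x => boltz (Function.update a i x))) (a i) < 0 := by
  obtain ⟨k, -, hk⟩ := Finset.exists_mem_eq_sup' ⟨i, Finset.mem_univ i⟩ a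
  rw [hk] at h
  have hexp3 : (4 : ℝ) < exp 3 := by linarith [add_one_lt_exp (by norm_num : (3 : ℝ) ≠ 0)]
  have hp_small : softmax a i < 1 / 4 :=
    calc softmax a i ≤ exp (a i - a k) := softmax_le_exp_sub a i k
      _ < exp (-3) := exp_lt_exp.2 (by linarith [log_natCast_nonneg n])
      _ < 1 / 4 := by rw [exp_neg, one_div]; exact inv_strictAnti₀ (by norm_num) hexp3
  have hgap : a i - boltz a + 1 < -2 := by linarith [sub_log_card_le_boltz a k]
  rw [deriv_deriv_boltz_update, log_softmax_add_entS]
  refine ⟨rfl, mul_neg_of_pos_of_neg (softmax_pos a i) ?_⟩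
  nlinarith

theorem statement12 (n : ℕ) (hn : 1 ≤ n) (i : Fin n) (a : Fin n → ℝ)
    (h : a i < Finset.univ.sup' ⟨i, Finset.mem_univ i⟩ a - Real.log n - 3) :
    deriv (deriv (fun x => boltz (Function.update a i x))) (a i) =
        softmax a i *
          ((1 - 2 * softmax a i) * (Real.log (softmax a i) + entS (softmax a) + 1) + 1) ∧
      deriv (deriv (fun x => boltz (Function.update a i x))) (a i) < 0 :=
  statement12_general n i a h

end
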